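/- Let R be a graded Noetherian ring with maximal graded ideal 𝔪 and M a finitely generated graded R-module satisfying: H_𝔪^{s',t'}(M) = 0 for s' < s and H_𝔪^{s,t'}(M) = 0 for t' > t. If z_1,...,z_s is an M-regular sequence of homogeneous elements, then H_𝔪^{0,t'}(M/(z_1,...,z_s)M) = 0 for t' > t + |z_1| + ... + |z_s|, and H_𝔪^{0, t+|z_1|+...+|z_s|}(M/(z_1,...,z_s)M) ≅ H_𝔪^{s,t}(M). -/

import Mathlib

/-!
Induct along the sequence, writing `M_i = M/(z_1,…,z_i)M` and `r = s - i`. If `H^n(M_i) = 0`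
for `n < r`, the long exact sequence of `0 → M_i(-|z_i|) → M_i → M_{i+1} → 0` makes the
connecting map `H^{r-1,t}(M_{i+1}) → H^{r,t-|z_i|}(M_i)` injective, so `H^n(M_{i+1}) = 0` for
`n < r - 1` and the top-degree vanishing moves up by `|z_i|`. In the new top internal degree
the connecting map is also surjective: the next term `H^{r,t}(M_i)` sits above the old top
degree because `|z_i| > 0`.
-/

namespace Function.Exact

variable {A B C : Type*}

theorem surjective_of_subsingleton [Zero C] [Subsingleton C] {f : A → B} {g : B → C}
    (h : Exact f g) : Surjective f :=
  fun b => (h b).mp (Subsingleton.elim _ _)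

theorem injective_of_subsingleton [AddGroup A] [AddGroup B] [AddGroup C] [Subsingleton A]
    {f : A →+ B} {g : B →+ C} (h : Exact f g) : Injective g := by
  refine (injective_iff_map_eq_zero g).mpr fun b hb => ?_
  obtain ⟨a, rfl⟩ := (h b).mp hb
  rw [Subsingleton.elim a 0, map_zero]

end Function.Exact

def IsTopCohomologyAt (H : ℕ → ℕ → ℤ → Type) [∀ i n t, AddCommGroup (H i n t)]
    (i r : ℕ) (T : ℤ) (X : Type) [AddCommGroup X] : Prop :=
  (∀ n < r, ∀ t, Subsingleton (H i n t)) ∧ (∀ t > T, Subsingleton (H i r t)) ∧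
    Nonempty (H i r T ≃+ X)

namespace IsTopCohomologyAt

variable {H : ℕ → ℕ → ℤ → Type} [∀ i n t, AddCommGroup (H i n t)] {d : ℕ → ℤ}
  {X : Type} [AddCommGroup X]

theorem succ {mulz : ∀ i n t, H i n t →+ H i n (t + d i)}
    {pr : ∀ i n t, H i n t →+ H (i + 1) n t}
    {δ : ∀ i n t, H (i + 1) n t →+ H i (n + 1) (t - d i)} {i k : ℕ} {T : ℤ} (hd : 0 < d i)
    (hex2 : ∀ n t, Function.Exact (pr i n t) (δ i n t))
    (hex3 : ∀ n t, Function.Exact (δ i n t) (mulz i (n + 1) (t - d i)))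
    (h : IsTopCohomologyAt H i (k + 1) (T - d i) X) :
    IsTopCohomologyAt H (i + 1) k T X := by
  obtain ⟨hlow, htop, ⟨e⟩⟩ := h
  have hδ : ∀ n ≤ k, ∀ t, Function.Injective (δ i n t) := fun n hn t =>
    have := hlow n (by omega) t
    (hex2 n t).injective_of_subsingleton
  refine ⟨fun n hn t => ?_, fun t ht => ?_, ?_⟩
  · have := hlow (n + 1) (by omega) (t - d i)
    exact (hδ n hn.le t).subsingleton
  · have := htop (t - d i) (by omega)
    exact (hδ k le_rfl t).subsingleton
  · have := htop (T - d i + d i) (by omega)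
    exact ⟨(AddEquiv.ofBijective (δ i k T)
      ⟨hδ k le_rfl T, (hex3 k T).surjective_of_subsingleton⟩).trans e⟩

end IsTopCohomologyAt

theorem stmt13_general (s : ℕ) (H : ℕ → ℕ → ℤ → Type)
    [∀ i n t, AddCommGroup (H i n t)]
    (d : ℕ → ℤ) (hd : ∀ i, 0 < d i)
    (mulz : ∀ i n t, H i n t →+ H i n (t + d i))
    (pr : ∀ i n t, H i n t →+ H (i + 1) n t)
    (δ : ∀ i n t, H (i + 1) n t →+ H i (n + 1) (t - d i))
    (hex2 : ∀ i < s, ∀ n t, Function.Exact (pr i n t) (δ i n t))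
    (hex3 : ∀ i < s, ∀ n t, Function.Exact (δ i n t) (mulz i (n + 1) (t - d i)))
    (t : ℤ)
    (hv1 : ∀ n < s, ∀ t' : ℤ, Subsingleton (H 0 n t'))
    (hv2 : ∀ t' > t, Subsingleton (H 0 s t')) :
    (∀ t' > t + ∑ i ∈ Finset.range s, d i, Subsingleton (H s 0 t')) ∧
    Nonempty (H s 0 (t + ∑ i ∈ Finset.range s, d i) ≃+ H 0 s t) := by
  have key : ∀ i r, i + r = s →
      IsTopCohomologyAt H i r (t + ∑ j ∈ Finset.range i, d j) (H 0 s t) := by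
    intro i
    induction i with
    | zero =>
      intro r hr
      obtain rfl : r = s := by omega
      simp only [Finset.range_zero, Finset.sum_empty, add_zero]
      exact ⟨hv1, hv2, ⟨AddEquiv.refl _⟩⟩
    | succ i ih =>
      intro r hir
      have hsum :
          t + ∑ j ∈ Finset.range (i + 1), d j - d i = t + ∑ j ∈ Finset.range i, d j := by
        rw [Finset.sum_range_succ]; ring
      refine .succ (hd i) (hex2 i (by omega)) (hex3 i (by omega)) ?_
      rw [hsum]
      exact ih (r + 1) (by omega)
  obtain ⟨-, htop, hiso⟩ := key s 0 (by omega)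
  exact ⟨htop, hiso⟩

/-- Graded local cohomology along a regular sequence, abstracted: `H i n t` stands for
`H_𝔪^{n,t}(M/(z_1,…,z_i)M)` for a regular sequence `z_1,…,z_s` of homogeneous elements
with `|z_i| = d i` (indexing `d (i-1) = |z_i|`); for each `i < s`, the short exact
sequence `0 → Σ^{d i} M/(z_1,…,z_i) → M/(z_1,…,z_i) → M/(z_1,…,z_{i+1}) → 0` yields a
long exact sequence, encoded by `mulz`, `pr`, `δ` and the exactness hypotheses.  If
`H_𝔪^{n,t'}(M) = 0` for `n < s` and `H_𝔪^{s,t'}(M) = 0` for `t' > t`, then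
`H_𝔪^{0,t'}(M/(z_1,…,z_s)) = 0` for `t' > t + |z_1| + ⋯ + |z_s|` and
`H_𝔪^{0, t + |z_1| + ⋯ + |z_s|}(M/(z_1,…,z_s)) ≅ H_𝔪^{s,t}(M)`. -/
theorem stmt13 (s : ℕ) (H : ℕ → ℕ → ℤ → Type)
    [∀ i n t, AddCommGroup (H i n t)]
    (d : ℕ → ℤ) (hd : ∀ i, 0 < d i)
    (mulz : ∀ i n t, H i n t →+ H i n (t + d i))
    (pr : ∀ i n t, H i n t →+ H (i + 1) n t)
    (δ : ∀ i n t, H (i + 1) n t →+ H i (n + 1) (t - d i))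
    (hex1 : ∀ i < s, ∀ n t, Function.Exact (mulz i n t) (pr i n (t + d i)))
    (hex2 : ∀ i < s, ∀ n t, Function.Exact (pr i n t) (δ i n t))
    (hex3 : ∀ i < s, ∀ n t, Function.Exact (δ i n t) (mulz i (n + 1) (t - d i)))
    (t : ℤ)
    (hv1 : ∀ n < s, ∀ t' : ℤ, Subsingleton (H 0 n t'))
    (hv2 : ∀ t' > t, Subsingleton (H 0 s t')) :
    (∀ t' > t + ∑ i ∈ Finset.range s, d i, Subsingleton (H s 0 t')) ∧
    Nonempty (H s 0 (t + ∑ i ∈ Finset.range s, d i) ≃+ H 0 s t) :=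
  stmt13_general s H d hd mulz pr δ hex2 hex3 t hv1 hv2
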